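/- For every constant β > 0, the redundancy of S^β is upper bounded by R_S^β(x_{1:n}) ≤ CL_w(𝒜) − m·ln β + Σ_{j∈𝒜} (1/2)·ln(n_j/(2π)) + n·ln(1 + β/n) + (β − 1/2)·ln(n/β + 1) + (1 − ln√(2π)). -/

import Mathlib

open Finset Real Filter

variable {𝒳 : Type*} [Fintype 𝒳] [DecidableEq 𝒳]

/-- `n_i^t`: number of occurrences of symbol `i` among the first `t` symbols
`x 0, …, x (t-1)` (the paper's `x_1, …, x_t`). -/
def cnt (x : ℕ → 𝒳) (i : 𝒳) (t : ℕ) : ℕ :=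
  ((Finset.range t).filter fun τ => x τ = i).card

/-- `𝒜_t`: the set of symbols occurring among the first `t` symbols. -/
def alph (x : ℕ → 𝒳) (t : ℕ) : Finset 𝒳 := (Finset.range t).image x

/-- Predictive probability `S^{β⃗}(x_{t+1} = i | x_{1:t})`. -/
noncomputable def Spred (x : ℕ → 𝒳) (w : ℕ → 𝒳 → ℝ) (β : ℕ → ℝ) (t : ℕ) (i : 𝒳) : ℝ :=
  if 0 < cnt x i t then (cnt x i t : ℝ) / (t + β t) else β t * w t i / (t + β t)

/-- Joint probability `S^{β⃗}(x_{1:n})`. -/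
noncomputable def Sjoint (x : ℕ → 𝒳) (w : ℕ → 𝒳 → ℝ) (β : ℕ → ℝ) (n : ℕ) : ℝ :=
  ∏ t ∈ Finset.range n, Spred x w β t (x t)

/-- `𝒩`: the set of times `t ∈ {0,…,n-1}` at which a new symbol occurs. -/
def newTimes (x : ℕ → 𝒳) (n : ℕ) : Finset ℕ :=
  (Finset.range n).filter fun t => x t ∉ alph x t

/-- `CL_w(𝒜)`: code length of the used alphabet. -/
noncomputable def CLw (x : ℕ → 𝒳) (w : ℕ → 𝒳 → ℝ) (n : ℕ) : ℝ :=
  ∑ t ∈ newTimes x n, Real.log (1 / w t (x t))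

/-- Redundancy `R_S^{β⃗}(x_{1:n}) = ln(n^{-n} ∏_{j∈𝒜} n_j^{n_j}) - ln S^{β⃗}(x_{1:n})`. -/
noncomputable def Red (x : ℕ → 𝒳) (w : ℕ → 𝒳 → ℝ) (β : ℕ → ℝ) (n : ℕ) : ℝ :=
  Real.log (((n : ℝ) ^ n)⁻¹ * ∏ j ∈ alph x n, (cnt x j n : ℝ) ^ cnt x j n)
    - Real.log (Sjoint x w β n)

set_option linter.unusedSectionVars false
set_option linter.unusedVariables false

section RedAux

lemma cnt_succ (x : ℕ → 𝒳) (i : 𝒳) (t : ℕ) :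
    cnt x i (t+1) = cnt x i t + (if x t = i then 1 else 0) := by
  unfold cnt
  rw [Finset.range_add_one, Finset.filter_insert]
  split
  · rw [Finset.card_insert_of_notMem (by simp)]
  · simp

lemma cnt_mono (x : ℕ → 𝒳) (i : 𝒳) : Monotone (cnt x i) := fun a b h =>
  Finset.card_le_card (Finset.filter_subset_filter _ (Finset.range_subset_range.2 h))

lemma cnt_lt_of (x : ℕ → 𝒳) {i : 𝒳} {t₁ t₂ : ℕ} (h : t₁ < t₂) (hx : x t₁ = i) :
    cnt x i t₁ < cnt x i t₂ := by
  have h1 : cnt x i t₁ + 1 = cnt x i (t₁ + 1) := by rw [cnt_succ, if_pos hx]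
  have h2 : cnt x i (t₁ + 1) ≤ cnt x i t₂ := cnt_mono x i h
  omega

lemma mem_alph_iff (x : ℕ → 𝒳) (i : 𝒳) (t : ℕ) : i ∈ alph x t ↔ 0 < cnt x i t := by
  rw [alph, cnt, Finset.card_pos, Finset.mem_image]
  constructor
  · rintro ⟨a, ha, rfl⟩; exact ⟨a, Finset.mem_filter.2 ⟨ha, rfl⟩⟩
  · rintro ⟨a, ha⟩; rw [Finset.mem_filter] at ha; exact ⟨a, ha.1, ha.2⟩

lemma cnt_injOn (x : ℕ → 𝒳) (j : 𝒳) (n : ℕ) :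
    Set.InjOn (fun t => cnt x j t) ((Finset.range n).filter fun t => x t = j) := by
  intro a ha b hb hab
  simp only [Finset.coe_filter, Set.mem_setOf_eq, Finset.mem_range] at ha hb
  by_contra hne
  rcases Nat.lt_or_ge a b with h | h
  · exact absurd hab (Nat.ne_of_lt (cnt_lt_of x h ha.2))
  · have h' : b < a := by omega
    exact absurd hab.symm (Nat.ne_of_lt (cnt_lt_of x h' hb.2))

lemma image_cnt (x : ℕ → 𝒳) (j : 𝒳) (n : ℕ) :
    ((Finset.range n).filter fun t => x t = j).image (fun t => cnt x j t)
      = Finset.range (cnt x j n) := by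
  apply Finset.eq_of_subset_of_card_le
  · intro c hc
    obtain ⟨t, ht, rfl⟩ := Finset.mem_image.1 hc
    rw [Finset.mem_filter, Finset.mem_range] at ht
    exact Finset.mem_range.2 (cnt_lt_of x ht.1 ht.2)
  · rw [Finset.card_range, Finset.card_image_of_injOn (cnt_injOn x j n)]
    rfl

lemma exists_first (x : ℕ → 𝒳) {j : 𝒳} {n : ℕ} (hj : j ∈ alph x n) :
    ∃ t ∈ newTimes x n, x t = j := by
  have h0 : (0 : ℕ) ∈ Finset.range (cnt x j n) :=
    Finset.mem_range.2 ((mem_alph_iff x j n).1 hj)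
  rw [← image_cnt x j n] at h0
  obtain ⟨t, ht, hct⟩ := Finset.mem_image.1 h0
  rw [Finset.mem_filter] at ht
  refine ⟨t, Finset.mem_filter.2 ⟨ht.1, ?_⟩, ht.2⟩
  rw [mem_alph_iff, ht.2, ← hct]
  omega

lemma card_newTimes (x : ℕ → 𝒳) (n : ℕ) : (newTimes x n).card = (alph x n).card := by
  apply Finset.card_bij (fun t _ => x t)
  · intro t ht
    rw [newTimes, Finset.mem_filter] at ht
    exact Finset.mem_image.2 ⟨t, ht.1, rfl⟩
  · intro a ha b hb hab
    rw [newTimes, Finset.mem_filter] at ha hb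
    by_contra hne
    rcases Nat.lt_or_ge a b with h | h
    · exact hb.2 (hab ▸ Finset.mem_image.2 ⟨a, Finset.mem_range.2 h, rfl⟩)
    · have h' : b < a := by omega
      exact ha.2 (hab ▸ Finset.mem_image.2 ⟨b, Finset.mem_range.2 h', rfl⟩)
  · intro j hj
    obtain ⟨t, ht, hxt⟩ := exists_first x hj
    exact ⟨t, ht, hxt⟩

lemma sum_cnt (x : ℕ → 𝒳) (n : ℕ) : ∑ j ∈ alph x n, cnt x j n = n := by
  have := Finset.card_eq_sum_card_fiberwise
    (fun t (ht : t ∈ Finset.range n) => Finset.mem_image.2 ⟨t, ht, rfl⟩ : ∀ t ∈ Finset.range n, x t ∈ alph x n)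
  simpa [cnt, alph] using this.symm

lemma sum_range_log (k : ℕ) : ∑ c ∈ Finset.range (k+1), Real.log c = Real.log (Nat.factorial k) := by
  induction k with
  | zero => simp
  | succ k ih =>
    rw [Finset.sum_range_succ, ih, Nat.factorial_succ]
    rcases Nat.eq_zero_or_pos k with h | h
    · subst h; simp
    · push_cast
      rw [Real.log_mul (by positivity) (by positivity)]
      ring

lemma sum_log_cnt_fiber (x : ℕ → 𝒳) (j : 𝒳) (n : ℕ) (hj : 0 < cnt x j n) :
    ∑ t ∈ (Finset.range n).filter (fun t => x t = j), Real.log (cnt x j t)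
      = Real.log (Nat.factorial (cnt x j n - 1)) := by
  have h := Finset.sum_image (f := fun c : ℕ => Real.log c)
    (g := fun t => cnt x j t) (s := (Finset.range n).filter fun t => x t = j)
    (fun a ha b hb hab => cnt_injOn x j n ha hb hab)
  rw [image_cnt] at h
  rw [← h]
  obtain ⟨k, hk⟩ : ∃ k, cnt x j n = k + 1 := ⟨cnt x j n - 1, by omega⟩
  rw [hk]
  simpa using sum_range_log k

end RedAux

section RedAna

lemma log_ge_aux {u : ℝ} (hu : 0 ≤ u) : 2*u/(2+u) ≤ Real.log (1+u) := by
  set f : ℝ → ℝ := fun u => Real.log (1+u) - 2*u/(2+u) with hf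
  have hder : ∀ v : ℝ, 0 ≤ v → HasDerivAt f (1/(1+v) - (2*(2+v) - 2*v*1)/(2+v)^2) v := by
    intro v hv
    have h1 : HasDerivAt (fun u : ℝ => 1 + u) 1 v := (hasDerivAt_id v).const_add 1
    have hlog : HasDerivAt (fun u : ℝ => Real.log (1+u)) (1/(1+v)) v :=
      h1.log (by positivity)
    have h2 : HasDerivAt (fun u : ℝ => 2*u) 2 v := by
      simpa using (hasDerivAt_id v).const_mul (2:ℝ)
    have h3 : HasDerivAt (fun u : ℝ => 2+u) 1 v := (hasDerivAt_id v).const_add 2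
    have hq : HasDerivAt (fun u : ℝ => 2*u/(2+u)) ((2*(2+v) - 2*v*1)/(2+v)^2) v :=
      h2.div h3 (by positivity)
    exact hlog.sub hq
  have hmono : MonotoneOn f (Set.Ici 0) := by
    apply monotoneOn_of_deriv_nonneg (convex_Ici 0)
    · intro v hv
      exact (hder v hv).differentiableAt.continuousAt.continuousWithinAt
    · intro v hv
      rw [interior_Ici] at hv
      exact ((hder v (le_of_lt hv)).differentiableAt).differentiableWithinAt
    · intro v hv
      rw [interior_Ici] at hv
      rw [(hder v (le_of_lt hv)).deriv]
      have hv' : (0:ℝ) < v := hv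
      have h4 : (2*(2+v) - 2*v*1) = 4 := by ring
      rw [h4]
      rw [sub_nonneg, div_le_div_iff₀ (by positivity) (by positivity)]
      nlinarith
  have h0 : f 0 = 0 := by simp [hf]
  have := hmono (Set.mem_Ici.2 le_rfl) (Set.mem_Ici.2 hu) hu
  rw [h0] at this
  simpa [hf, sub_nonneg] using this

lemma key_ineq {z : ℝ} (hz : 0 < z) : 1 ≤ (z + 1/2) * (Real.log (z+1) - Real.log z) := by
  have hu : (0:ℝ) ≤ 1/z := by positivity
  have h := log_ge_aux hu
  have h1 : (1 : ℝ) + 1/z = (z+1)/z := by field_simp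
  have h2 : Real.log ((z+1)/z) = Real.log (z+1) - Real.log z :=
    Real.log_div (by positivity) (ne_of_gt hz)
  rw [h1, h2] at h
  have h3 : 2*(1/z)/(2+1/z) = 2/(2*z+1) := by
    rw [div_eq_div_iff (by positivity) (by positivity)]
    field_simp
  rw [h3] at h
  have h4 : (z + 1/2) * (2/(2*z+1)) = 1 := by field_simp
  calc (1:ℝ) = (z + 1/2) * (2/(2*z+1)) := h4.symm
    _ ≤ (z + 1/2) * (Real.log (z+1) - Real.log z) := by
        apply mul_le_mul_of_nonneg_left h (by positivity)

lemma sum_log_le (β : ℝ) (hβ : 0 < β) (n : ℕ) :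
    ∑ t ∈ Finset.range n, Real.log ((t:ℝ) + β) ≤
      (((n:ℝ)+β-1/2) * Real.log ((n:ℝ)+β) - ((n:ℝ)+β)) - ((β-1/2) * Real.log β - β) := by
  induction n with
  | zero => simp
  | succ n ih =>
    rw [Finset.sum_range_succ]
    have hz : (0:ℝ) < (n:ℝ) + β := by positivity
    have hk := key_ineq hz
    have hstep : Real.log ((n:ℝ)+β) ≤
        ((((n:ℝ)+1)+β-1/2) * Real.log (((n:ℝ)+1)+β) - (((n:ℝ)+1)+β))
        - ((((n:ℝ)+β)-1/2) * Real.log ((n:ℝ)+β) - ((n:ℝ)+β)) := by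
      have harr : ((((n:ℝ)+1)+β-1/2) * Real.log (((n:ℝ)+1)+β) - (((n:ℝ)+1)+β))
          - ((((n:ℝ)+β)-1/2) * Real.log ((n:ℝ)+β) - ((n:ℝ)+β)) - Real.log ((n:ℝ)+β)
          = (((n:ℝ)+β) + 1/2) * (Real.log (((n:ℝ)+β)+1) - Real.log ((n:ℝ)+β)) - 1 := by
        have : ((n:ℝ)+1)+β = ((n:ℝ)+β)+1 := by ring
        rw [this]; ring
      linarith [harr, hk]
    push_cast
    push_cast at ih hstep
    linarith

lemma stirling_lower (k : ℕ) (hk : 1 ≤ k) :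
    (k:ℝ)*Real.log k - k + (1/2)*(Real.log (2*π) + Real.log k)
      ≤ Real.log (Nat.factorial k) := by
  obtain ⟨m, rfl⟩ : ∃ m, k = m + 1 := ⟨k - 1, by omega⟩
  have htend : Tendsto (Stirling.stirlingSeq ∘ Nat.succ) atTop (nhds (Real.sqrt π)) :=
    (Filter.tendsto_add_atTop_iff_nat 1).2 Stirling.tendsto_stirlingSeq_sqrt_pi
  have hge : Real.sqrt π ≤ Stirling.stirlingSeq (m+1) :=
    Stirling.stirlingSeq'_antitone.le_of_tendsto htend m
  have hpos : 0 < Stirling.stirlingSeq (m+1) := Stirling.stirlingSeq'_pos m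
  have hlog : Real.log (Real.sqrt π) ≤ Real.log (Stirling.stirlingSeq (m+1)) :=
    Real.log_le_log (Real.sqrt_pos.2 Real.pi_pos) hge
  have hfor := Stirling.log_stirlingSeq_formula (m+1)
  set K : ℝ := ((m:ℕ):ℝ) + 1 with hK
  have hKpos : (0:ℝ) < K := by positivity
  have hcast : ((m+1 : ℕ):ℝ) = K := by push_cast [hK]; ring
  rw [hcast] at hfor
  have h1 : Real.log (K / Real.exp 1) = Real.log K - 1 := by
    rw [Real.log_div (ne_of_gt hKpos) (ne_of_gt (Real.exp_pos 1)), Real.log_exp]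
  have h2 : Real.log (2*K) = Real.log 2 + Real.log K :=
    Real.log_mul two_ne_zero (ne_of_gt hKpos)
  have h3 : Real.log (2*π) = Real.log 2 + Real.log π :=
    Real.log_mul two_ne_zero (ne_of_gt Real.pi_pos)
  have h4 : Real.log (Real.sqrt π) = (1/2) * Real.log π := by
    rw [Real.log_sqrt Real.pi_pos.le]; ring
  have hgoalcast : ((m+1 : ℕ):ℝ) = K := hcast
  rw [show ((m+1:ℕ)) = m+1 from rfl]
  push_cast
  rw [show ((m:ℝ)+1) = K from rfl]
  rw [h3]
  rw [hfor, h1, h2, h4] at hlog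
  linarith

end RedAna

/-- total sum of log of counts equals sum of log factorials -/
lemma sum_log_cnt (x : ℕ → 𝒳) (n : ℕ) :
    ∑ t ∈ Finset.range n, Real.log (cnt x (x t) t)
      = ∑ j ∈ alph x n, Real.log (Nat.factorial (cnt x j n - 1)) := by
  rw [← Finset.sum_fiberwise_of_maps_to
    (fun t ht => Finset.mem_image.2 ⟨t, ht, rfl⟩ : ∀ t ∈ Finset.range n, x t ∈ alph x n)
    (fun t => Real.log (cnt x (x t) t))]
  apply Finset.sum_congr rfl
  intro j hj
  have h1 : ∑ t ∈ (Finset.range n).filter (fun t => x t = j), Real.log (cnt x (x t) t)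
      = ∑ t ∈ (Finset.range n).filter (fun t => x t = j), Real.log (cnt x j t) := by
    apply Finset.sum_congr rfl
    intro t ht
    rw [(Finset.mem_filter.1 ht).2]
  rw [h1, sum_log_cnt_fiber x j n ((mem_alph_iff x j n).1 hj)]

lemma log_Sjoint (x : ℕ → 𝒳) (w : ℕ → 𝒳 → ℝ) (n : ℕ)
    (hw : ∀ t i, 0 < w t i) (β : ℝ) (hβ : 0 < β) :
    Real.log (Sjoint x w (fun _ => β) n) =
      ((newTimes x n).card * Real.log β - CLw x w n)
      + ∑ j ∈ alph x n, Real.log (Nat.factorial (cnt x j n - 1))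
      - ∑ t ∈ Finset.range n, Real.log ((t:ℝ) + β) := by
  have htβ : ∀ t : ℕ, (0:ℝ) < (t:ℝ) + β := fun t => by positivity
  have hpos : ∀ t, 0 < Spred x w (fun _ => β) t (x t) := by
    intro t
    unfold Spred
    split
    · rename_i h
      have : (0:ℝ) < (cnt x (x t) t : ℝ) := by exact_mod_cast h
      exact div_pos this (htβ t)
    · exact div_pos (mul_pos hβ (hw t (x t))) (htβ t)
  rw [Sjoint, Real.log_prod (fun t _ => (hpos t).ne')]
  have hterm : ∀ t ∈ Finset.range n,
      Real.log (Spred x w (fun _ => β) t (x t))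
        = (Real.log (cnt x (x t) t)
           + (if x t ∉ alph x t then Real.log β + Real.log (w t (x t)) else 0))
          - Real.log ((t:ℝ) + β) := by
    intro t _
    unfold Spred
    by_cases h : 0 < cnt x (x t) t
    · rw [if_pos h, if_neg (by simp [mem_alph_iff, h])]
      rw [Real.log_div (by exact_mod_cast h.ne') (htβ t).ne']
      ring
    · rw [if_neg h, if_pos (by simp [mem_alph_iff]; omega)]
      have h0 : cnt x (x t) t = 0 := by omega
      rw [h0]
      rw [Real.log_div (mul_pos hβ (hw t (x t))).ne' (htβ t).ne',
          Real.log_mul hβ.ne' (hw t (x t)).ne']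
      simp
  rw [Finset.sum_congr rfl hterm, Finset.sum_sub_distrib, Finset.sum_add_distrib]
  rw [sum_log_cnt]
  have hB : ∑ t ∈ Finset.range n,
      (if x t ∉ alph x t then Real.log β + Real.log (w t (x t)) else 0)
      = (newTimes x n).card * Real.log β - CLw x w n := by
    rw [← Finset.sum_filter]
    rw [show (Finset.range n).filter (fun t => x t ∉ alph x t) = newTimes x n from rfl]
    rw [Finset.sum_add_distrib, Finset.sum_const, nsmul_eq_mul]
    have : CLw x w n = - ∑ t ∈ newTimes x n, Real.log (w t (x t)) := by
      rw [CLw, ← Finset.sum_neg_distrib]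
      apply Finset.sum_congr rfl
      intro t ht
      rw [one_div, Real.log_inv]
    rw [this]
    ring
  rw [hB]
  ring

/-- upper bound of Proposition 1, Eq. (8). -/
theorem red_upper_bound
    (n : ℕ) (hn : 1 ≤ n) (x : ℕ → 𝒳) (w : ℕ → 𝒳 → ℝ)
    (hw : ∀ t i, 0 < w t i)
    (hwsum : ∀ t, ∑ k ∈ Finset.univ \ alph x t, w t k ≤ 1)
    (β : ℝ) (hβ : 0 < β) :
    Red x w (fun _ => β) n ≤
      CLw x w n - (alph x n).card * Real.log β
      + ∑ j ∈ alph x n, (1/2) * Real.log ((cnt x j n : ℝ) / (2 * π))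
      + n * Real.log (1 + β / n) + (β - 1/2) * Real.log (n / β + 1)
      + (1 - Real.log (Real.sqrt (2 * π))) := by
  have hnR : (0:ℝ) < (n:ℝ) := by exact_mod_cast hn
  have h2π : (0:ℝ) < 2*π := by positivity
  -- Step 1: exact formula for Red
  have hcntpos : ∀ j ∈ alph x n, 0 < cnt x j n := fun j hj => (mem_alph_iff x j n).1 hj
  have hfirst : Real.log (((n : ℝ) ^ n)⁻¹ * ∏ j ∈ alph x n, (cnt x j n : ℝ) ^ cnt x j n)
      = -(n * Real.log n) + ∑ j ∈ alph x n, (cnt x j n : ℝ) * Real.log (cnt x j n) := by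
    rw [Real.log_mul (by positivity) (by
      apply Finset.prod_ne_zero_iff.2
      intro j hj
      have := hcntpos j hj
      positivity)]
    rw [Real.log_inv, Real.log_pow]
    rw [Real.log_prod (fun j hj => by have := hcntpos j hj; positivity)]
    congr 1
    apply Finset.sum_congr rfl
    intro j hj
    rw [Real.log_pow]
  have hRed : Red x w (fun _ => β) n =
      CLw x w n - (alph x n).card * Real.log β
      + (∑ j ∈ alph x n, ((cnt x j n : ℝ) * Real.log (cnt x j n)
            - Real.log (Nat.factorial (cnt x j n - 1))))
      - n * Real.log n
      + ∑ t ∈ Finset.range n, Real.log ((t:ℝ) + β) := by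
    rw [Red, hfirst, log_Sjoint x w n hw β hβ, card_newTimes, Finset.sum_sub_distrib]
    ring
  -- Step 2: per-symbol Stirling bound
  have hT1 : ∑ j ∈ alph x n, ((cnt x j n : ℝ) * Real.log (cnt x j n)
        - Real.log (Nat.factorial (cnt x j n - 1)))
      ≤ (n:ℝ) + ∑ j ∈ alph x n, (1/2) * Real.log ((cnt x j n : ℝ) / (2 * π)) := by
    have hsum : ∑ j ∈ alph x n, ((cnt x j n : ℝ)) = (n:ℝ) := by
      exact_mod_cast congrArg (Nat.cast : ℕ → ℝ) (sum_cnt x n)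
    rw [← hsum, ← Finset.sum_add_distrib]
    apply Finset.sum_le_sum
    intro j hj
    set k := cnt x j n with hk
    have hk1 : 1 ≤ k := hcntpos j hj
    have hkR : (0:ℝ) < (k:ℝ) := by exact_mod_cast hk1
    have hfac : Real.log (Nat.factorial (k-1))
        = Real.log (Nat.factorial k) - Real.log k := by
      have : (k:ℝ) * (Nat.factorial (k-1) : ℝ) = (Nat.factorial k : ℝ) := by
        exact_mod_cast Nat.mul_factorial_pred (by omega)
      have hfpos : (0:ℝ) < (Nat.factorial (k-1) : ℝ) := by
        exact_mod_cast Nat.factorial_pos (k-1)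
      rw [← this, Real.log_mul hkR.ne' hfpos.ne']
      ring
    have hst := stirling_lower k hk1
    have hdiv : Real.log ((k:ℝ) / (2*π)) = Real.log k - Real.log (2*π) :=
      Real.log_div hkR.ne' h2π.ne'
    rw [hfac, hdiv]
    linarith
  -- Step 3: telescoping bound
  have hT2 := sum_log_le β hβ n
  -- Step 4: constant bound
  have hconst : Real.log (2*π) ≤ 2 := by
    rw [Real.log_le_iff_le_exp h2π]
    have h1 : Real.exp 2 = Real.exp 1 * Real.exp 1 := by
      rw [← Real.exp_add]; norm_num
    have h2 := Real.exp_one_gt_d9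
    have h3 := Real.pi_lt_d2
    nlinarith
  -- Step 5: rewrite target logs
  have hlog1 : Real.log (1 + β / n) = Real.log ((n:ℝ)+β) - Real.log n := by
    rw [show (1:ℝ) + β/n = ((n:ℝ)+β)/n by field_simp]
    exact Real.log_div (by positivity) hnR.ne'
  have hlog2 : Real.log ((n:ℝ) / β + 1) = Real.log ((n:ℝ)+β) - Real.log β := by
    rw [show (n:ℝ)/β + 1 = ((n:ℝ)+β)/β by field_simp]
    exact Real.log_div (by positivity) hβ.ne'
  have hlog3 : Real.log (Real.sqrt (2*π)) = (1/2) * Real.log (2*π) := by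
    rw [Real.log_sqrt h2π.le]; ring
  rw [hlog1, hlog2, hlog3]
  rw [hRed]
  nlinarith [hT1, hT2, hconst]
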